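/- Let H be a real Hilbert space and C a nonempty closed convex subset of H. Let T_1,…,T_N : C → C be closed quasi-nonexpansive mappings, each L-Lipschitz, with F = ⋂_{i=1}^N F(T_i) ≠ ∅. For n ≥ 1 set j_n = ((n−1) mod N) + 1. Let {α_n} ⊂ [0,1] with α_n → 0. Let {x_n} be generated by: x_1 ∈ C, C_1 = Q_1 = C; y_n = α_n x_1 + (1 − α_n) T_{j_n} x_n; C_n = {v ∈ C : ‖v − y_n‖² ≤ α_n‖v − x_1‖² + (1 − α_n)‖v − x_n‖²}; Q_n = {v ∈ Q_{n−1} : ⟨x_1 − x_n, x_n − v⟩ ≥ 0} for n ≥ 2; and x_{n+1} is the metric projection of x_1 onto C_n ∩ Q_n. Then {x_n} converges strongly to the metric projection of x_1 onto F. -/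

import Mathlib

/-!
Both `Cₙ` and `Qₙ` are convex and contain `F`: in `Cₙ` the quadratic terms cancel, leaving a
half-space, and `F ⊆ Cₙ` by quasi-nonexpansiveness and convexity of `‖·‖²`; `F ⊆ Qₙ₊₁` is the
variational inequality for the projection `xₙ₊₁` onto `Cₙ ∩ Qₙ`. As `xₘ₊₁ ∈ Qₙ₊₁` for `m ≥ n`,
`‖xₙ₊₁ - x₁‖² + ‖xₘ₊₁ - xₙ₊₁‖² ≤ ‖xₘ₊₁ - x₁‖²`, and these distances are bounded by `‖p - x₁‖`
for `p ∈ F`, so `(xₙ)` is Cauchy. From `xₙ₊₁ ∈ Cₙ` and `αₙ → 0` the images `T_{jₙ} xₙ` have the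
same limit `z`, and along the indices with `jₙ = i` closedness of `Tᵢ` gives `Tᵢ z = z`.
-/

open Filter Topology RealInnerProductSpace

lemma cauchySeq_of_dist_sq_le_sub {X : Type*} [PseudoMetricSpace X] {u : ℕ → X} {s : ℕ → ℝ}
    (hs : BddAbove (Set.range s)) (h : ∀ k m, k ≤ m → dist (u k) (u m) ^ 2 ≤ s m - s k) :
    CauchySeq u := by
  have hmono : Monotone s :=
    monotone_nat_of_le_succ fun n => sub_nonneg.1 ((sq_nonneg _).trans (h n (n + 1) n.le_succ))
  rw [Metric.cauchySeq_iff']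
  intro ε hε
  obtain ⟨N, hN⟩ := ((tendsto_atTop_ciSup hmono hs).eventually
    (Ioi_mem_nhds (sub_lt_self (⨆ n, s n) (pow_pos hε 2)))).exists
  refine ⟨N, fun n hn => lt_of_pow_lt_pow_left₀ 2 hε.le ?_⟩
  calc dist (u n) (u N) ^ 2 = dist (u N) (u n) ^ 2 := by rw [dist_comm]
    _ ≤ s n - s N := h N n hn
    _ ≤ (⨆ n, s n) - s N := by gcongr; exact le_ciSup hs n
    _ < ε ^ 2 := by linarith

lemma tendsto_cyclic_index {N : ℕ} (hN : 0 < N) (i : ℕ) :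
    Tendsto (fun k => k * N + i + 1) atTop atTop :=
  tendsto_atTop_mono (fun k => show k ≤ _ by nlinarith) tendsto_id

lemma tendsto_comp_cyclic {X : Type*} {N : ℕ} (hN : 0 < N) {f : Fin N → ℕ → X} {l : Filter X}
    (h : Tendsto (fun n => f ⟨(n - 1) % N, Nat.mod_lt _ hN⟩ n) atTop l) (i : Fin N) :
    Tendsto (fun k => f i (k * N + i + 1)) atTop l := by
  convert h.comp (tendsto_cyclic_index hN i) using 2 with k
  simp [Nat.mod_eq_of_lt i.isLt]

def IsMetricProj {E : Type*} [SeminormedAddCommGroup E] (S : Set E) (w z : E) : Prop :=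
  z ∈ S ∧ ∀ v ∈ S, ‖z - w‖ ≤ ‖v - w‖

lemma norm_sub_convexComb_sq_le {E : Type*} [SeminormedAddCommGroup E] [NormedSpace ℝ E] {a : ℝ}
    (ha : a ∈ Set.Icc (0 : ℝ) 1) {p u t w : E} (ht : ‖p - t‖ ≤ ‖p - w‖) :
    ‖p - (a • u + (1 - a) • t)‖ ^ 2 ≤ a * ‖p - u‖ ^ 2 + (1 - a) * ‖p - w‖ ^ 2 := by
  have hconv := (convexOn_univ_norm.pow (fun _ _ => norm_nonneg _) 2).2 (Set.mem_univ (p - u))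
    (Set.mem_univ (p - t)) ha.1 (sub_nonneg.2 ha.2) (add_sub_cancel a 1)
  calc ‖p - (a • u + (1 - a) • t)‖ ^ 2 = ‖a • (p - u) + (1 - a) • (p - t)‖ ^ 2 := by
        congr 2; module
    _ ≤ a * ‖p - u‖ ^ 2 + (1 - a) * ‖p - t‖ ^ 2 := by simpa using hconv
    _ ≤ a * ‖p - u‖ ^ 2 + (1 - a) * ‖p - w‖ ^ 2 := by
        have : 0 ≤ 1 - a := sub_nonneg.2 ha.2
        gcongr

section Hilbert

variable {H : Type*} [NormedAddCommGroup H] [InnerProductSpace ℝ H]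

lemma norm_sub_sq_add_norm_sub_sq_le {w z v : H} (h : 0 ≤ ⟪w - z, z - v⟫) :
    ‖z - w‖ ^ 2 + ‖v - z‖ ^ 2 ≤ ‖v - w‖ ^ 2 := by
  have hinner : ⟪v - z, z - w⟫ = ⟪w - z, z - v⟫ := by
    rw [← neg_sub z v, ← neg_sub w z, inner_neg_neg, real_inner_comm]
  have hexpand := norm_add_sq_real (v - z) (z - w)
  rw [sub_add_sub_cancel, hinner] at hexpand
  linarith

lemma cauchySeq_of_inner_sub_nonneg {u : ℕ → H} {w : H} {B : ℝ} (hB : ∀ n, ‖u n - w‖ ≤ B)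
    (h : ∀ k m, k ≤ m → 0 ≤ ⟪w - u k, u k - u m⟫) : CauchySeq u :=
  cauchySeq_of_dist_sq_le_sub (s := fun n => ‖u n - w‖ ^ 2)
    ⟨B ^ 2, by rintro _ ⟨n, rfl⟩; exact pow_le_pow_left₀ (norm_nonneg _) (hB n) 2⟩
    fun k m hkm => by
      rw [dist_comm, dist_eq_norm]
      linarith [norm_sub_sq_add_norm_sub_sq_le (h k m hkm)]

lemma convex_setOf_inner_sub_nonneg (a b : H) : Convex ℝ {v : H | 0 ≤ ⟪a, b - v⟫} := by
  simp_rw [inner_sub_right, sub_nonneg]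
  exact convex_halfSpace_le (innerₛₗ ℝ a).isLinear _

lemma convex_setOf_norm_sub_sq_le (y u w : H) (a : ℝ) :
    Convex ℝ {v : H | ‖v - y‖ ^ 2 ≤ a * ‖v - u‖ ^ 2 + (1 - a) * ‖v - w‖ ^ 2} := by
  have hset : {v : H | ‖v - y‖ ^ 2 ≤ a * ‖v - u‖ ^ 2 + (1 - a) * ‖v - w‖ ^ 2} =
      {v | innerₛₗ ℝ (a • u + (1 - a) • w - y) v ≤
        (a * ‖u‖ ^ 2 + (1 - a) * ‖w‖ ^ 2 - ‖y‖ ^ 2) / 2} := by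
    ext v
    simp only [Set.mem_ofPred_eq, innerₛₗ_apply_apply, norm_sub_sq_real, inner_sub_left,
      inner_add_left, real_inner_smul_left, real_inner_comm v]
    constructor <;> intro h <;> linarith
  rw [hset]
  exact convex_halfSpace_le (innerₛₗ ℝ _).isLinear _

lemma IsMetricProj.inner_sub_nonpos {S : Set H} {w z v : H} (h : IsMetricProj S w z)
    (hS : Convex ℝ S) (hv : v ∈ S) : ⟪w - z, v - z⟫ ≤ 0 := by
  have : Nonempty S := ⟨⟨z, h.1⟩⟩
  refine (norm_eq_iInf_iff_real_inner_le_zero hS h.1).1 (le_antisymm ?_ ?_) v hv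
  · exact le_ciInf fun v => by rw [norm_sub_rev, norm_sub_rev w]; exact h.2 v v.2
  · exact ciInf_le ⟨0, Set.forall_mem_range.2 fun _ => norm_nonneg _⟩ (⟨z, h.1⟩ : S)

section ShrinkingProjection

variable {D Q : ℕ → Set H} {u : ℕ → H}

lemma convex_of_eq_sep_inner_nonneg (hQ0 : Convex ℝ (Q 0))
    (hQ : ∀ n, Q (n + 1) = {v ∈ Q n | 0 ≤ ⟪u 0 - u (n + 1), u (n + 1) - v⟫}) :
    ∀ n, Convex ℝ (Q n)
  | 0 => hQ0
  | n + 1 => by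
    rw [hQ n]
    exact (convex_of_eq_sep_inner_nonneg hQ0 hQ n).inter (convex_setOf_inner_sub_nonneg _ _)

lemma subset_of_eq_sep_inner_nonneg {F : Set H} (hD : ∀ n, Convex ℝ (D n))
    (hFD : ∀ n, F ⊆ D n) (hQ0 : Convex ℝ (Q 0)) (hFQ0 : F ⊆ Q 0)
    (hQ : ∀ n, Q (n + 1) = {v ∈ Q n | 0 ≤ ⟪u 0 - u (n + 1), u (n + 1) - v⟫})
    (hu : ∀ n, IsMetricProj (D n ∩ Q n) (u 0) (u (n + 1))) :
    ∀ n, F ⊆ Q n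
  | 0 => hFQ0
  | n + 1 => fun p hp => by
    have hpQ := subset_of_eq_sep_inner_nonneg hD hFD hQ0 hFQ0 hQ hu n hp
    have hvi := (hu n).inner_sub_nonpos ((hD n).inter (convex_of_eq_sep_inner_nonneg hQ0 hQ n))
      ⟨hFD n hp, hpQ⟩
    rw [hQ n]
    refine ⟨hpQ, ?_⟩
    rw [← neg_sub p, inner_neg_right]
    linarith

theorem exists_tendsto_of_shrinking_projection [CompleteSpace H] {F : Set H}
    (hFne : F.Nonempty) (hD : ∀ n, Convex ℝ (D n)) (hFD : ∀ n, F ⊆ D n)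
    (hQ0 : Convex ℝ (Q 0)) (hFQ0 : F ⊆ Q 0)
    (hQ : ∀ n, Q (n + 1) = {v ∈ Q n | 0 ≤ ⟪u 0 - u (n + 1), u (n + 1) - v⟫})
    (hu : ∀ n, IsMetricProj (D n ∩ Q n) (u 0) (u (n + 1))) :
    ∃ z, Tendsto u atTop (𝓝 z) ∧ ∀ p ∈ F, ‖z - u 0‖ ≤ ‖p - u 0‖ := by
  have hFQ := subset_of_eq_sep_inner_nonneg hD hFD hQ0 hFQ0 hQ hu
  have hdist : ∀ p ∈ F, ∀ n, ‖u (n + 1) - u 0‖ ≤ ‖p - u 0‖ :=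
    fun p hp n => (hu n).2 p ⟨hFD n hp, hFQ n hp⟩
  have hQanti : Antitone Q :=
    antitone_nat_of_succ_le fun n => by rw [hQ n]; exact Set.sep_subset _ _
  have hmem : ∀ n, u (n + 1) ∈ Q (n + 1) := fun n => by rw [hQ n]; exact ⟨(hu n).1.2, by simp⟩
  have hinner : ∀ k m, k ≤ m → 0 ≤ ⟪u 0 - u k, u k - u m⟫ := by
    rintro (_ | k) (_ | m) hkm
    · simp
    · simp
    · omega
    · have := hQanti (by omega : k + 1 ≤ m + 1) (hmem m)
      rw [hQ k] at this
      exact this.2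
  obtain ⟨p, hp⟩ := hFne
  have hbound : ∀ n, ‖u n - u 0‖ ≤ ‖p - u 0‖
    | 0 => by simp
    | n + 1 => hdist p hp n
  obtain ⟨z, hz⟩ := cauchySeq_tendsto_of_complete (cauchySeq_of_inner_sub_nonneg hbound hinner)
  exact ⟨z, hz, fun q hq => le_of_tendsto (((hz.comp (tendsto_add_atTop_nat 1)).sub_const _).norm)
    (Eventually.of_forall (hdist q hq))⟩

end ShrinkingProjection

theorem tendsto_of_norm_sub_sq_le_convexComb {x t y : ℕ → H} {α : ℕ → ℝ} {w p z : H}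
    (hαlim : Tendsto α atTop (𝓝 0)) (hx : Tendsto x atTop (𝓝 z))
    (hy : ∀ᶠ n in atTop, y n = α n • w + (1 - α n) • t n)
    (ht : ∀ᶠ n in atTop, ‖p - t n‖ ≤ ‖p - x n‖)
    (hxy : ∀ᶠ n in atTop, ‖x (n + 1) - y n‖ ^ 2 ≤
      α n * ‖x (n + 1) - w‖ ^ 2 + (1 - α n) * ‖x (n + 1) - x n‖ ^ 2) :
    Tendsto t atTop (𝓝 z) := by
  have hx1 : Tendsto (fun n => x (n + 1)) atTop (𝓝 z) := hx.comp (tendsto_add_atTop_nat 1)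
  have hxy0 : Tendsto (fun n => x (n + 1) - y n) atTop (𝓝 0) := by
    have hr : Tendsto (fun n => α n * ‖x (n + 1) - w‖ ^ 2 + (1 - α n) * ‖x (n + 1) - x n‖ ^ 2)
        atTop (𝓝 0) := by
      simpa using (hαlim.mul ((hx1.sub_const w).norm.pow 2)).add
        ((tendsto_const_nhds.sub hαlim).mul ((hx1.sub hx).norm.pow 2))
    have hsq := squeeze_zero' (Eventually.of_forall fun n => sq_nonneg _) hxy hr
    rw [tendsto_zero_iff_norm_tendsto_zero]
    simpa using hsq.sqrt
  have hyt0 : Tendsto (fun n => y n - t n) atTop (𝓝 0) := by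
    have hb : Tendsto (fun n => |α n| * (‖w - p‖ + ‖p - x n‖)) atTop (𝓝 0) := by
      simpa using hαlim.abs.mul (tendsto_const_nhds.add (tendsto_const_nhds.sub hx).norm)
    rw [tendsto_zero_iff_norm_tendsto_zero]
    refine squeeze_zero' (Eventually.of_forall fun n => norm_nonneg _) ?_ hb
    filter_upwards [hy, ht] with n hyn htn
    have hyt : y n - t n = α n • (w - t n) := by rw [hyn]; module
    rw [hyt, norm_smul, Real.norm_eq_abs]
    gcongr
    exact (norm_sub_le_norm_sub_add_norm_sub w p (t n)).trans (by linarith)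
  simpa using (hx1.sub hxy0).sub hyt0

end Hilbert

theorem stmt_7_general
    {H : Type*} [NormedAddCommGroup H] [InnerProductSpace ℝ H] [CompleteSpace H]
    (C : Set H) (hCcl : IsClosed C) (hCcv : Convex ℝ C)
    (N : ℕ) (hN : 0 < N) (T : Fin N → H → H)
    (hQN : ∀ i, ∀ p ∈ C, T i p = p → ∀ x ∈ C, ‖p - T i x‖ ≤ ‖p - x‖)
    (hTclosed : ∀ i, ∀ (u : ℕ → H) (p q : H), (∀ n, u n ∈ C) → p ∈ C →
      Tendsto u atTop (𝓝 p) → Tendsto (fun n => T i (u n)) atTop (𝓝 q) → T i p = q)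
    (F : Set H) (hF : F = ⋂ i, {x ∈ C | T i x = x}) (hFne : F.Nonempty)
    (α : ℕ → ℝ) (hα : ∀ n, α n ∈ Set.Icc (0 : ℝ) 1) (hαlim : Tendsto α atTop (𝓝 0))
    (x : ℕ → H) (y : ℕ → H) (CS QS : ℕ → Set H)
    (hx1 : x 1 ∈ C) (hQS1 : QS 1 = C)
    (hy : ∀ n, 1 ≤ n →
      y n = α n • x 1 + (1 - α n) • T ⟨(n - 1) % N, Nat.mod_lt _ hN⟩ (x n))
    (hCS : ∀ n, 1 ≤ n → CS n =
      {v ∈ C | ‖v - y n‖ ^ 2 ≤ α n * ‖v - x 1‖ ^ 2 + (1 - α n) * ‖v - x n‖ ^ 2})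
    (hQS : ∀ n, 1 ≤ n → QS (n + 1) =
      {v ∈ QS n | 0 ≤ (inner ℝ (x 1 - x (n + 1)) (x (n + 1) - v) : ℝ)})
    (hproj : ∀ n, 1 ≤ n → x (n + 1) ∈ CS n ∩ QS n ∧
      ∀ v ∈ CS n ∩ QS n, ‖x (n + 1) - x 1‖ ≤ ‖v - x 1‖) :
    ∃ z ∈ F, (∀ v ∈ F, ‖z - x 1‖ ≤ ‖v - x 1‖) ∧ Tendsto x atTop (𝓝 z) := by
  have hFC : ∀ p ∈ F, p ∈ C ∧ ∀ i, T i p = p := fun p hp => by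
    rw [hF, Set.mem_iInter] at hp
    exact ⟨(hp ⟨0, hN⟩).1, fun i => (hp i).2⟩
  have hxCS : ∀ n, 1 ≤ n → x (n + 1) ∈ C ∧ ‖x (n + 1) - y n‖ ^ 2 ≤
      α n * ‖x (n + 1) - x 1‖ ^ 2 + (1 - α n) * ‖x (n + 1) - x n‖ ^ 2 :=
    fun n hn => by simpa only [hCS n hn, Set.mem_ofPred_eq] using (hproj n hn).1.1
  have hxC : ∀ n, 1 ≤ n → x n ∈ C
    | 1, _ => hx1
    | n + 2, _ => (hxCS (n + 1) (by omega)).1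
  have hFCS : ∀ n, 1 ≤ n → F ⊆ CS n := fun n hn p hp => by
    obtain ⟨hpC, hpT⟩ := hFC p hp
    rw [hCS n hn, hy n hn]
    exact ⟨hpC, norm_sub_convexComb_sq_le (hα n) (hQN _ p hpC (hpT _) (x n) (hxC n hn))⟩
  obtain ⟨z, hxz, hzmin⟩ := exists_tendsto_of_shrinking_projection (u := fun n => x (n + 1))
    hFne (fun n => by rw [hCS _ (by omega)]; exact hCcv.inter (convex_setOf_norm_sub_sq_le _ _ _ _))
    (fun n => hFCS _ (by omega)) (hQS1 ▸ hCcv) (hQS1 ▸ fun p hp => (hFC p hp).1)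
    (fun n => hQS _ (by omega)) (fun n => hproj _ (by omega))
  have hx : Tendsto x atTop (𝓝 z) := (tendsto_add_atTop_iff_nat 1).1 hxz
  have hzC : z ∈ C := hCcl.mem_of_tendsto hx (eventually_atTop.2 ⟨1, hxC⟩)
  obtain ⟨p, hp⟩ := hFne
  have hTx : Tendsto (fun n => T ⟨(n - 1) % N, Nat.mod_lt _ hN⟩ (x n)) atTop (𝓝 z) :=
    tendsto_of_norm_sub_sq_le_convexComb hαlim hx (eventually_atTop.2 ⟨1, hy⟩)
      (eventually_atTop.2 ⟨1, fun n hn => hQN _ p (hFC p hp).1 ((hFC p hp).2 _) _ (hxC n hn)⟩)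
      (eventually_atTop.2 ⟨1, fun n hn => (hxCS n hn).2⟩)
  have hzF : z ∈ F := by
    rw [hF, Set.mem_iInter]
    exact fun i => ⟨hzC, hTclosed i _ z z (fun k => hxC _ (by omega)) hzC
      (hx.comp (tendsto_cyclic_index hN i))
      (tendsto_comp_cyclic hN (f := fun i n => T i (x n)) hTx i)⟩
  exact ⟨z, hzF, hzmin, hx⟩

/-- Sequential hybrid method for a finite family of closed, Lipschitz,
quasi-nonexpansive mappings in a real Hilbert space (Theorem 3.12, Hilbert-space
form). For `n ≥ 1`, `jₙ = ((n-1) % N) + 1` is represented by the index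
`⟨(n-1) % N, _⟩ : Fin N`. -/
theorem stmt_7
    {H : Type*} [NormedAddCommGroup H] [InnerProductSpace ℝ H] [CompleteSpace H]
    (C : Set H) (hCne : C.Nonempty) (hCcl : IsClosed C) (hCcv : Convex ℝ C)
    (N : ℕ) (hN : 0 < N) (T : Fin N → H → H) (hTmaps : ∀ i, Set.MapsTo (T i) C C)
    (hQN : ∀ i, ∀ p ∈ C, T i p = p → ∀ x ∈ C, ‖p - T i x‖ ≤ ‖p - x‖)
    (hTclosed : ∀ i, ∀ (u : ℕ → H) (p q : H), (∀ n, u n ∈ C) → p ∈ C →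
      Tendsto u atTop (𝓝 p) → Tendsto (fun n => T i (u n)) atTop (𝓝 q) → T i p = q)
    (L : ℝ) (hLip : ∀ i, ∀ x ∈ C, ∀ y ∈ C, ‖T i x - T i y‖ ≤ L * ‖x - y‖)
    (F : Set H) (hF : F = ⋂ i, {x ∈ C | T i x = x}) (hFne : F.Nonempty)
    (α : ℕ → ℝ) (hα : ∀ n, α n ∈ Set.Icc (0 : ℝ) 1) (hαlim : Tendsto α atTop (𝓝 0))
    (x : ℕ → H) (y : ℕ → H) (CS QS : ℕ → Set H)
    (hx1 : x 1 ∈ C) (hQS1 : QS 1 = C)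
    (hy : ∀ n, 1 ≤ n →
      y n = α n • x 1 + (1 - α n) • T ⟨(n - 1) % N, Nat.mod_lt _ hN⟩ (x n))
    (hCS : ∀ n, 1 ≤ n → CS n =
      {v ∈ C | ‖v - y n‖ ^ 2 ≤ α n * ‖v - x 1‖ ^ 2 + (1 - α n) * ‖v - x n‖ ^ 2})
    (hQS : ∀ n, 1 ≤ n → QS (n + 1) =
      {v ∈ QS n | 0 ≤ (inner ℝ (x 1 - x (n + 1)) (x (n + 1) - v) : ℝ)})
    (hproj : ∀ n, 1 ≤ n → x (n + 1) ∈ CS n ∩ QS n ∧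
      ∀ v ∈ CS n ∩ QS n, ‖x (n + 1) - x 1‖ ≤ ‖v - x 1‖) :
    ∃ z ∈ F, (∀ v ∈ F, ‖z - x 1‖ ≤ ‖v - x 1‖) ∧ Tendsto x atTop (𝓝 z) :=
  stmt_7_general C hCcl hCcv N hN T hQN hTclosed F hF hFne α hα hαlim x y CS QS hx1 hQS1 hy hCS hQS
    hproj
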